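/- Let X be a normal topological space, F a closed subspace of X, and Y a Euclidean neighborhood retract, i.e., there exist a natural number m, an open subset U of ℝᵐ, a topological embedding e : Y → ℝᵐ with image contained in U, and a continuous map r : U → Y with r(e(y)) = y for all y ∈ Y. Suppose f₀ : F → Y and g : X → Y are continuous maps such that f₀ is homotopic to the restriction g|_F of g to F. Then there exists a continuous map f : X → Y such that f|_F = f₀ and f is homotopic to g. -/

import Mathlib

/-!
Embed `Y` in `ℝᵐ` and regard the homotopy from `f₀` to `g|_F` as a family `β : F → C(I, ℝᵐ)` of
paths in `U`. Since `X` is only normal and `C(I, ℝᵐ)` is infinite-dimensional, `β` need not extend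
to `X`, but it extends up to any continuous positive error: extend the coefficients of the
Bernstein approximations of `β` by Tietze, and glue them with weights which, on `F`, form a
partition of unity supported on the terms already close to `β`. After correcting the endpoints,
this gives paths from an extension of `e ∘ f₀` to `e ∘ g` which stay in `U` over `F`, hence over
an open `W ⊇ F`. A Urysohn function for `F` and `Wᶜ` freezes the paths at `e ∘ g` outside `W`, and
the retraction `U → Y` turns the result into the homotopy.
-/

open scoped unitInterval
open Metric Set Filter Topology

section Bernstein

variable {E : Type*} [NormedAddCommGroup E] [NormedSpace ℝ E]

noncomputable def bernsteinSum (n : ℕ) (a : Fin (n + 1) → E) : C(I, E) :=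
  ∑ k : Fin (n + 1), bernstein n k • ContinuousMap.const I (a k)

theorem bernsteinSum_apply (n : ℕ) (a : Fin (n + 1) → E) (t : I) :
    bernsteinSum n a t = ∑ k : Fin (n + 1), bernstein n k t • a k := by
  simp [bernsteinSum]

theorem continuous_bernsteinSum (n : ℕ) : Continuous (bernsteinSum (E := E) n) := by
  refine ContinuousMap.continuous_of_continuous_uncurry _ ?_
  simp only [Function.uncurry_def, bernsteinSum_apply]
  fun_prop

theorem norm_bernsteinSum_le {n : ℕ} {a : Fin (n + 1) → E} {C : ℝ} (ha : ∀ k, ‖a k‖ ≤ C) :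
    ‖bernsteinSum n a‖ ≤ C := by
  have hC : 0 ≤ C := (norm_nonneg _).trans (ha 0)
  refine (ContinuousMap.norm_le _ hC).2 fun t => ?_
  calc ‖bernsteinSum n a t‖ ≤ ∑ k : Fin (n + 1), bernstein n k t * ‖a k‖ := by
        rw [bernsteinSum_apply]
        refine (norm_sum_le _ _).trans_eq (Finset.sum_congr rfl fun k _ => ?_)
        rw [norm_smul, Real.norm_of_nonneg bernstein_nonneg]
    _ ≤ ∑ k : Fin (n + 1), bernstein n k t * C := by gcongr with k; exact ha k
    _ = C := by rw [← Finset.sum_mul, bernstein.probability, one_mul]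

variable [FiniteDimensional ℝ E] {X : Type*} [TopologicalSpace X] [NormalSpace X] {F : Set X}

theorem IsClosed.exists_bernstein_seq_tendsto (hF : IsClosed F) (Ψ : C(F, C(I, E)))
    (hΨ : ∀ x, ‖Ψ x‖ ≤ 1) :
    ∃ D : ℕ → C(X, C(I, E)), (∀ n x, ‖D n x‖ ≤ 1) ∧
      ∀ x : F, Tendsto (fun n => D n x) atTop (𝓝 (Ψ x)) := by
  have hnode (n : ℕ) (k : Fin (n + 1)) : ∃ A : C(X, E), (∀ x, A x ∈ closedBall 0 1) ∧
      A.restrict F = ⟨fun x => Ψ x (bernstein.z k), by fun_prop⟩ :=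
    ContinuousMap.exists_forall_mem_restrict_eq hF _ fun x =>
      mem_closedBall_zero_iff.2 (((Ψ x).norm_coe_le_norm _).trans (hΨ x))
  choose A hA hAF using hnode
  refine ⟨fun n => ⟨fun x => bernsteinSum n (fun k => A n k x),
    (continuous_bernsteinSum n).comp (continuous_pi fun k => (A n k).continuous)⟩, fun n x => ?_,
    fun x => ?_⟩
  · exact norm_bernsteinSum_le fun k => mem_closedBall_zero_iff.1 (hA n k x)
  · convert bernsteinApproximation_uniform (Ψ x) using 2 with n
    exact congrArg (bernsteinSum n) (funext fun k => DFunLike.congr_fun (hAF n k) x)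

end Bernstein

section Series

variable {E : Type*} [NormedAddCommGroup E] [NormedSpace ℝ E] [CompleteSpace E]

theorem dist_tsum_smul_le {v : ℕ → ℝ} (hv : ∀ n, 0 ≤ v n) (hsum : HasSum v 1) {y : ℕ → E}
    {z : E} {δ : ℝ} (hy : ∀ n, v n ≠ 0 → dist (y n) z ≤ δ) :
    dist (∑' n, v n • y n) z ≤ δ := by
  have hbound (n : ℕ) : ‖v n • (y n - z)‖ ≤ v n * δ := by
    rcases eq_or_ne (v n) 0 with h | h
    · simp [h]
    · rw [norm_smul, Real.norm_of_nonneg (hv n), ← dist_eq_norm]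
      exact mul_le_mul_of_nonneg_left (hy n h) (hv n)
  have hδ : HasSum (fun n => v n * δ) δ := by simpa using hsum.mul_right δ
  have hd := Summable.of_norm_bounded hδ.summable hbound
  have hs : HasSum (fun n => v n • y n) (∑' n, v n • (y n - z) + z) := by
    simpa [smul_sub] using hd.hasSum.add (hsum.smul_const z)
  rw [hs.tsum_eq, dist_eq_norm, add_sub_cancel_right]
  exact tsum_of_norm_bounded hδ hbound

variable {X : Type*} [TopologicalSpace X] [NormalSpace X] {F : Set X}

theorem IsClosed.exists_approx_extension_of_tendsto (hF : IsClosed F) (D : ℕ → C(X, E))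
    (hD : ∀ n x, ‖D n x‖ ≤ 1) (Ψ : C(F, E))
    (hΨ : ∀ x : F, Tendsto (fun n => D n x) atTop (𝓝 (Ψ x))) (δ : C(F, ℝ)) (hδ : ∀ x, 0 < δ x) :
    ∃ c : C(X, E), ∀ x : F, dist (c x) (Ψ x) ≤ δ x := by
  let w (n : ℕ) : C(F, ℝ) := ⟨fun x => min 1 (max 0 (δ x - dist (D n x) (Ψ x))), by fun_prop⟩
  have hw (n : ℕ) (x : F) : w n x ∈ Icc 0 1 :=
    ⟨le_min zero_le_one (le_max_left _ _), min_le_left _ _⟩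
  have hw_dist (n : ℕ) (x : F) (h : w n x ≠ 0) : dist (D n x) (Ψ x) ≤ δ x := by
    contrapose! h
    simp [w, max_eq_left (sub_nonpos.2 h.le)]
  have hgeo (n : ℕ) (a : ℝ) (ha : a ∈ Icc 0 1) : ‖(1 / 2 : ℝ) ^ n * a‖ ≤ (1 / 2) ^ n := by
    rw [norm_mul, Real.norm_of_nonneg ha.1, norm_pow, Real.norm_of_nonneg (by norm_num)]
    exact mul_le_of_le_one_right (by positivity) ha.2
  let s : C(F, ℝ) := ⟨fun x => ∑' n, (1 / 2 : ℝ) ^ n * w n x,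
    continuous_tsum (fun n => by fun_prop) summable_geometric_two fun n x => hgeo n _ (hw n x)⟩
  have hs_sum (x : F) : HasSum (fun n => (1 / 2 : ℝ) ^ n * w n x) (s x) :=
    (Summable.of_norm_bounded summable_geometric_two fun n => hgeo n _ (hw n x)).hasSum
  have hs_pos (x : F) : 0 < s x := by
    obtain ⟨n, hn⟩ :=
      ((tendsto_iff_dist_tendsto_zero.1 (hΨ x)).eventually_lt_const (hδ x)).exists
    exact (hs_sum x).summable.tsum_pos (fun k => mul_nonneg (by positivity) (hw k x).1) n
      (mul_pos (by positivity) (lt_min one_pos (lt_max_of_lt_right (sub_pos.2 hn))))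
  choose W hW hWF using fun n => ContinuousMap.exists_restrict_eq_forall_mem_of_closed (w n)
    (hw n) (nonempty_Icc.2 zero_le_one) hF
  obtain ⟨P, hPF⟩ := ContinuousMap.exists_restrict_eq hF
    ⟨fun x => (s x)⁻¹, s.continuous.inv₀ fun x => (hs_pos x).ne'⟩
  let T : C(X, E) := ⟨fun x => ∑' n, ((1 / 2 : ℝ) ^ n * W n x) • D n x,
    continuous_tsum (fun n => by fun_prop) summable_geometric_two fun n x =>
      (norm_smul_le _ _).trans ((mul_le_of_le_one_right (norm_nonneg _) (hD n x)).trans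
        (hgeo n _ (hW n x)))⟩
  refine ⟨⟨fun x => P x • T x, by fun_prop⟩, fun x => ?_⟩
  have hWx (n : ℕ) : W n x = w n x := DFunLike.congr_fun (hWF n) x
  have hPx : P x = (s x)⁻¹ := DFunLike.congr_fun hPF x
  simp only [ContinuousMap.coe_mk, T, hWx, hPx, ← tsum_const_smul'', smul_smul]
  refine dist_tsum_smul_le (fun n => ?_) ?_ fun n hn => hw_dist n x ?_
  · exact mul_nonneg (inv_nonneg.2 (hs_pos x).le) (mul_nonneg (by positivity) (hw n x).1)
  · simpa [(hs_pos x).ne'] using (hs_sum x).mul_left (s x)⁻¹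
  · rintro h
    simp [h] at hn

end Series

section Endpoints

variable {X E : Type*} [TopologicalSpace X] [NormedAddCommGroup E] [NormedSpace ℝ E]

noncomputable def withEndpoints (c : C(X, C(I, E))) (a b : C(X, E)) : C(X, C(I, E)) :=
  ContinuousMap.curry ⟨fun p => c p.1 p.2 + (1 - (p.2 : ℝ)) • (a p.1 - c p.1 0) +
    (p.2 : ℝ) • (b p.1 - c p.1 1), by fun_prop⟩

variable (c : C(X, C(I, E))) (a b : C(X, E)) (x : X)

theorem withEndpoints_apply (t : I) : withEndpoints c a b x t =
    c x t + (1 - (t : ℝ)) • (a x - c x 0) + (t : ℝ) • (b x - c x 1) := rfl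

@[simp] theorem withEndpoints_zero : withEndpoints c a b x 0 = a x := by
  simp [withEndpoints_apply]

@[simp] theorem withEndpoints_one : withEndpoints c a b x 1 = b x := by
  simp [withEndpoints_apply]

theorem dist_withEndpoints_le {q : C(I, E)} (h0 : q 0 = a x) (h1 : q 1 = b x) :
    dist (withEndpoints c a b x) q ≤ 2 * dist (c x) q := by
  refine (ContinuousMap.dist_le (by positivity)).2 fun t => ?_
  have hd (s : I) : ‖q s - c x s‖ ≤ dist (c x) q := by
    rw [← dist_eq_norm, dist_comm]; exact ContinuousMap.dist_apply_le_dist s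
  have ht0 : 0 ≤ 1 - (t : ℝ) := sub_nonneg.2 t.2.2
  have ht1 : 0 ≤ (t : ℝ) := t.2.1
  rw [dist_eq_norm, withEndpoints_apply, ← h0, ← h1]
  calc _ = ‖(c x t - q t) + (1 - (t : ℝ)) • (q 0 - c x 0) + (t : ℝ) • (q 1 - c x 1)‖ := by
        congr 1; abel
    _ ≤ dist (c x) q + (1 - (t : ℝ)) * dist (c x) q + (t : ℝ) * dist (c x) q := by
      refine norm_add₃_le.trans (add_le_add_three ?_ ?_ ?_)
      · rw [← dist_eq_norm]; exact ContinuousMap.dist_apply_le_dist t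
      · rw [norm_smul, Real.norm_of_nonneg ht0]; exact mul_le_mul_of_nonneg_left (hd 0) ht0
      · rw [norm_smul, Real.norm_of_nonneg ht1]; exact mul_le_mul_of_nonneg_left (hd 1) ht1
    _ = 2 * dist (c x) q := by ring

end Endpoints

theorem exists_continuous_pos_ball_subset {Z M : Type*} [TopologicalSpace Z] [PseudoMetricSpace M]
    {V : Set M} (hV : IsOpen V) (f : C(Z, M)) (hf : ∀ z, f z ∈ V) :
    ∃ δ : C(Z, ℝ), ∀ z, 0 < δ z ∧ ball (f z) (δ z) ⊆ V := by
  rcases Vᶜ.eq_empty_or_nonempty with h | h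
  · exact ⟨1, fun z => ⟨one_pos, by simp [compl_empty_iff.1 h]⟩⟩
  · refine ⟨⟨fun z => infDist (f z) Vᶜ, by fun_prop⟩, fun z => ⟨?_, ball_infDist_compl_subset⟩⟩
    exact (hV.isClosed_compl.notMem_iff_infDist_pos h).1 (not_not.2 (hf z))

theorem IsClosed.exists_homotopy_mem_of_forall_mem {X Z : Type*} [TopologicalSpace X]
    [NormalSpace X] [TopologicalSpace Z] {F : Set X} (hF : IsClosed F) {V : Set Z} (hV : IsOpen V)
    (B : C(X, C(I, Z))) (hB1 : ∀ x, B x 1 ∈ V) (hBF : ∀ x ∈ F, ∀ t, B x t ∈ V) :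
    ∃ K : C(I × X, V), (∀ x, (K (1, x) : Z) = B x 1) ∧ ∀ x ∈ F, (K (0, x) : Z) = B x 0 := by
  let W := {x | range (B x) ⊆ V}
  have hW : IsOpen W := (ContinuousMap.isOpen_setOfPred_range_subset hV).preimage B.continuous
  obtain ⟨u, hu0, hu1, hu01⟩ := exists_continuous_zero_one_of_isClosed hW.isClosed_compl hF
    (disjoint_compl_left_iff_subset.2 fun x hx => range_subset_iff.2 (hBF x hx))
  -- `τ (t, x) = 1 - (1 - t) u x`, so the paths are frozen at their end `B x 1` where `u` vanishes
  let τ : C(I × X, I) := ⟨fun p => σ (σ p.1 * ⟨u p.2, hu01 p.2⟩), by fun_prop⟩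
  have hτ (p : I × X) : B p.2 (τ p) ∈ V := by
    by_cases hx : p.2 ∈ W
    · exact hx (mem_range_self _)
    · have : τ p = 1 := by
        ext; simp [τ, hu0 hx]
      rw [this]; exact hB1 _
  refine ⟨⟨fun p => ⟨B p.2 (τ p), hτ p⟩, by fun_prop⟩, fun x => ?_, fun x hx => ?_⟩
  · simp [τ]
  · simp [τ, hu1 hx]

section PathFamilies

variable {E : Type*} [NormedAddCommGroup E] [NormedSpace ℝ E] [FiniteDimensional ℝ E]
  {X : Type*} [TopologicalSpace X] [NormalSpace X] {F : Set X}

theorem IsClosed.exists_approx_extension (hF : IsClosed F) (Φ : C(F, C(I, E)))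
    (δ : C(F, ℝ)) (hδ : ∀ x, 0 < δ x) :
    ∃ c : C(X, C(I, E)), ∀ x : F, dist (c x) (Φ x) ≤ δ x := by
  obtain ⟨M, hM, hMF⟩ := ContinuousMap.exists_restrict_eq_forall_mem_of_closed
    ⟨fun x => ‖Φ x‖ + 1, by fun_prop⟩ (t := Ici 1) (fun x => by simp) nonempty_Ici hF
  have hMx (x : F) : M x = ‖Φ x‖ + 1 := DFunLike.congr_fun hMF x
  have hM0 (x : X) : 0 < M x := one_pos.trans_le (hM x)
  let Ψ : C(F, C(I, E)) := ⟨fun x => (M x)⁻¹ • Φ x,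
    ((M.continuous.comp continuous_subtype_val).inv₀ fun x => (hM0 x).ne').smul Φ.continuous⟩
  have hΨ (x : F) : ‖Ψ x‖ ≤ 1 := by
    change ‖(M x)⁻¹ • Φ x‖ ≤ 1
    rw [norm_smul, norm_inv, Real.norm_of_nonneg (hM0 x).le, inv_mul_le_one₀ (hM0 x), hMx]
    linarith
  obtain ⟨D, hD, hDΨ⟩ := hF.exists_bernstein_seq_tendsto Ψ hΨ
  obtain ⟨c, hc⟩ := hF.exists_approx_extension_of_tendsto D hD Ψ hDΨ ⟨fun x => δ x / M x,
    δ.continuous.div (M.continuous.comp continuous_subtype_val) fun x => (hM0 x).ne'⟩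
    fun x => div_pos (hδ x) (hM0 x)
  refine ⟨⟨fun x => M x • c x, by fun_prop⟩, fun x => ?_⟩
  have hΦ : Φ x = M x • Ψ x := by simp [Ψ, smul_smul, (hM0 x).ne']
  calc dist (M x • c x) (Φ x) = M x * dist (c x) (Ψ x) := by
        rw [hΦ, dist_eq_norm, dist_eq_norm, ← smul_sub, norm_smul, Real.norm_of_nonneg (hM0 x).le]
    _ ≤ M x * (δ x / M x) := mul_le_mul_of_nonneg_left (hc x) (hM0 x).le
    _ = δ x := mul_div_cancel₀ _ (hM0 x).ne'

theorem IsClosed.exists_homotopy_extension_of_isOpen (hF : IsClosed F) {U : Set E}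
    (hU : IsOpen U) (β : C(F, C(I, E))) (hβ : ∀ x t, β x t ∈ U) (g : C(X, E))
    (hg : ∀ x, g x ∈ U) (hβg : ∀ x : F, β x 1 = g x) :
    ∃ K : C(I × X, U), (∀ x, (K (1, x) : E) = g x) ∧ ∀ x : F, (K (0, x) : E) = β x 0 := by
  obtain ⟨ψ, hψ⟩ := ContinuousMap.exists_restrict_eq hF ⟨fun x => β x 0, by fun_prop⟩
  obtain ⟨δ, hδ⟩ := exists_continuous_pos_ball_subset
    (ContinuousMap.isOpen_setOfPred_range_subset hU) β fun x => range_subset_iff.2 (hβ x)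
  obtain ⟨c, hc⟩ := hF.exists_approx_extension β ⟨fun x => δ x / 3, by fun_prop⟩
    fun x => div_pos (hδ x).1 three_pos
  let B := withEndpoints c ψ g
  have hBF (x : X) (hx : x ∈ F) (t : I) : B x t ∈ U := by
    have hx0 : β ⟨x, hx⟩ 0 = ψ x := (DFunLike.congr_fun hψ ⟨x, hx⟩).symm
    have hdist : dist (B x) (β ⟨x, hx⟩) < δ ⟨x, hx⟩ :=
      calc dist (B x) (β ⟨x, hx⟩) ≤ 2 * dist (c x) (β ⟨x, hx⟩) :=
            dist_withEndpoints_le c ψ g x hx0 (hβg ⟨x, hx⟩)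
        _ ≤ 2 * (δ ⟨x, hx⟩ / 3) := by gcongr; exact hc ⟨x, hx⟩
        _ < δ ⟨x, hx⟩ := by linarith [(hδ ⟨x, hx⟩).1]
    exact (hδ ⟨x, hx⟩).2 (mem_ball.2 hdist) (mem_range_self t)
  obtain ⟨K, hK1, hK0⟩ := hF.exists_homotopy_mem_of_forall_mem hU B (by simpa [B]) hBF
  refine ⟨K, fun x => by simp [hK1, B], fun x => ?_⟩
  rw [hK0 x x.2, withEndpoints_zero]
  exact DFunLike.congr_fun hψ x

end PathFamilies

/-- Homotopy extension lemma for maps into a Euclidean neighborhood retract: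
if `X` is normal, `F ⊆ X` is closed, `Y` is an ENR, `f₀ : F → Y` and
`g : X → Y` are continuous with `f₀` homotopic to `g|_F`, then `f₀` extends to
a continuous map `f : X → Y` homotopic to `g`. -/
theorem homotopy_extension_into_ENR (X Y : Type*)
    [TopologicalSpace X] [NormalSpace X] [TopologicalSpace Y]
    (hENR : ∃ (m : ℕ) (U : Set (Fin m → ℝ)) (e : Y → (Fin m → ℝ)) (r : U → Y),
      IsOpen U ∧ Topology.IsEmbedding e ∧ Set.range e ⊆ U ∧ Continuous r ∧
      ∀ (y : Y) (h : e y ∈ U), r ⟨e y, h⟩ = y)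
    (F : Set X) (hF : IsClosed F)
    (f₀ : C(F, Y)) (g : C(X, Y))
    (h : f₀.Homotopic (g.comp ⟨Subtype.val, continuous_subtype_val⟩)) :
    ∃ f : C(X, Y), (∀ x : F, f x = f₀ x) ∧ f.Homotopic g := by
  obtain ⟨m, U, e, r, hU, he, heU, hr, hre⟩ := hENR
  obtain ⟨H⟩ := h
  obtain ⟨K, hK1, hK0⟩ := hF.exists_homotopy_extension_of_isOpen hU
    (ContinuousMap.curry ⟨fun p : F × I => e (H (p.2, p.1)), by fun_prop⟩)
    (fun _ _ => heU (mem_range_self _)) ((⟨e, he.continuous⟩ : C(Y, Fin m → ℝ)).comp g)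
    (fun _ => heU (mem_range_self _)) (fun x => by simp)
  let R : C(U, Y) := ⟨r, hr⟩
  have hR (y : Y) (z : U) (hz : (z : Fin m → ℝ) = e y) : R z = y := by
    obtain ⟨z, hzU⟩ := z
    subst hz
    exact hre y hzU
  refine ⟨(R.comp K).curry 0, fun x => hR _ _ ?_, ⟨⟨R.comp K, fun _ => rfl, fun x => hR _ _ ?_⟩⟩⟩
  · simpa using hK0 x
  · simpa using hK1 x
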